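/- For every quantum channel Φ, the trace norm contraction coefficient is bounded by the quantum Doeblin coefficient: η_tr(Φ) ≤ 1 − α(Φ). -/

import Mathlib

open Matrix Kronecker BigOperators
open scoped ComplexOrder

noncomputable section

/-- The trace norm (sum of singular values) of a complex matrix: `tr √(AᴴA)`. -/
def traceNorm {m n : Type*} [Fintype m] [Fintype n] [DecidableEq n] (A : Matrix m n ℂ) : ℝ :=
  (((Matrix.posSemidef_conjTranspose_mul_self A).1.eigenvectorUnitary : Matrix n n ℂ) *
    diagonal ((fun x : ℝ => (x : ℂ)) ∘ Real.sqrt ∘ (Matrix.posSemidef_conjTranspose_mul_self A).1.eigenvalues) *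
    (star (Matrix.posSemidef_conjTranspose_mul_self A).1.eigenvectorUnitary : Matrix n n ℂ)).trace.re

/-- A density matrix: positive semidefinite with trace one. -/
def IsDensity {n : Type*} [Fintype n] [DecidableEq n] (ρ : Matrix n n ℂ) : Prop :=
  ρ.PosSemidef ∧ ρ.trace = 1

/-- Trace norm contraction coefficient of a map on matrices. -/
def etaTr {dA dB : ℕ} (Φ : Matrix (Fin dA) (Fin dA) ℂ → Matrix (Fin dB) (Fin dB) ℂ) : ℝ :=
  sSup {r : ℝ | ∃ ρ σ : Matrix (Fin dA) (Fin dA) ℂ, IsDensity ρ ∧ IsDensity σ ∧ ρ ≠ σ ∧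
    r = traceNorm (Φ ρ - Φ σ) / traceNorm (ρ - σ)}

/-- Optimal success probability for transmitting one of `k` messages through `Φ`. -/
def Psucc {dA dB : ℕ} (Φ : Matrix (Fin dA) (Fin dA) ℂ → Matrix (Fin dB) (Fin dB) ℂ)
    (k : ℕ) : ℝ :=
  sSup {r : ℝ | ∃ (M : Fin k → Matrix (Fin dB) (Fin dB) ℂ)
      (ρ : Fin k → Matrix (Fin dA) (Fin dA) ℂ),
    (∀ i, (M i).PosSemidef) ∧ (∑ i, M i = 1) ∧ (∀ i, IsDensity (ρ i)) ∧
    r = (1 / (k : ℝ)) * ∑ i, ((M i * Φ (ρ i)).trace).re}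

/-- The Euclidean (ℓ₂) norm of a complex vector. -/
def l2norm {n : Type*} [Fintype n] (v : n → ℂ) : ℝ :=
  Real.sqrt (∑ i, ‖v i‖ ^ 2)

/-- Choi state of a map on matrices: `(1/dA) ∑ᵢⱼ Eᵢⱼ ⊗ Φ(Eᵢⱼ)`. -/
def choi {dA dB : ℕ} (Φ : Matrix (Fin dA) (Fin dA) ℂ → Matrix (Fin dB) (Fin dB) ℂ) :
    Matrix (Fin dA × Fin dB) (Fin dA × Fin dB) ℂ :=
  (dA : ℂ)⁻¹ • ∑ i : Fin dA, ∑ j : Fin dA,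
    (Matrix.single i j (1 : ℂ)) ⊗ₖ (Φ (Matrix.single i j (1 : ℂ)))

namespace DoeblinAux

open Matrix Kronecker BigOperators
open scoped ComplexOrder

variable {n : Type*} [Fintype n] [DecidableEq n]

lemma trace_conj_unitary (U : Matrix.unitaryGroup n ℂ) (D : Matrix n n ℂ) :
    ((U : Matrix n n ℂ) * D * star (U : Matrix n n ℂ)).trace = D.trace := by
  rw [Matrix.trace_mul_cycle, Unitary.coe_star_mul_self, Matrix.one_mul]

lemma traceNorm_herm {Δ : Matrix n n ℂ} (hΔ : Δ.IsHermitian) :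
    traceNorm Δ = ∑ i, |hΔ.eigenvalues i| := by
  have hsa : IsSelfAdjoint Δ := hΔ
  have hsq : Δᴴ * Δ = Δ ^ 2 := by rw [hΔ.eq, pow_two]
  have h1 := (Matrix.posSemidef_conjTranspose_mul_self Δ).1
  have hm : (h1.eigenvectorUnitary : Matrix n n ℂ) *
      diagonal ((fun x : ℝ => (x : ℂ)) ∘ Real.sqrt ∘ h1.eigenvalues) *
      (star h1.eigenvectorUnitary : Matrix n n ℂ) = cfc Real.sqrt (Δᴴ * Δ) := by
    rw [h1.cfc_eq, IsHermitian.cfc, Unitary.conjStarAlgAut_apply]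
    rfl
  have h2 : cfc Real.sqrt (Δᴴ * Δ) = cfc (fun x : ℝ => |x|) Δ := by
    rw [hsq, ← cfc_comp_pow Real.sqrt 2 Δ Real.continuous_sqrt.continuousOn hsa]
    congr 1
    funext x
    exact Real.sqrt_sq_eq_abs x
  rw [traceNorm, hm, h2, hΔ.cfc_eq, IsHermitian.cfc, Unitary.conjStarAlgAut_apply,
    trace_conj_unitary, Matrix.trace_diagonal]
  simp [← Complex.ofReal_sum]

lemma psd_diag_entry {A : Matrix n n ℂ} (hA : A.PosSemidef) (i : n) :
    0 ≤ (A i i).re ∧ (A i i).im = 0 := by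
  have h := hA.dotProduct_mulVec_nonneg (Pi.single i 1)
  have he : dotProduct (star (Pi.single i 1)) (A *ᵥ Pi.single i 1) = A i i := by
    simp [Matrix.mulVec_single, dotProduct, Pi.single_apply, apply_ite (star : ℂ → ℂ)]
  rw [he] at h
  rw [Complex.le_def] at h
  exact ⟨h.1, h.2.symm⟩

omit [DecidableEq n] in
lemma psd_empty [IsEmpty n] (M : Matrix n n ℂ) : M.PosSemidef := by
  refine Matrix.PosSemidef.of_dotProduct_mulVec_nonneg ?_ ?_
  · funext i j; exact isEmptyElim i
  · intro x
    simp [dotProduct, Finset.univ_eq_empty]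

omit [DecidableEq n] in
lemma psd_trace_re_nonneg' {A : Matrix n n ℂ} (h : ∀ i, 0 ≤ (A i i).re) : 0 ≤ A.trace.re := by
  rw [Matrix.trace]
  rw [show (∑ i, A.diag i).re = ∑ i, (A i i).re by simp [Complex.re_sum, Matrix.diag]]
  exact Finset.sum_nonneg fun i _ => h i

lemma psd_trace_re_nonneg {A : Matrix n n ℂ} (hA : A.PosSemidef) : 0 ≤ A.trace.re :=
  psd_trace_re_nonneg' fun i => (psd_diag_entry hA i).1

omit [DecidableEq n] in
lemma herm_trace_real {X : Matrix n n ℂ} (hX : X.IsHermitian) :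
    X.trace = (X.trace.re : ℂ) := by
  have him : X.trace.im = 0 := by
    rw [Matrix.trace]
    rw [show (∑ i, X.diag i).im = ∑ i, (X i i).im by simp [Complex.im_sum, Matrix.diag]]
    apply Finset.sum_eq_zero
    intro i _
    have h1 := congrArg (fun M : Matrix n n ℂ => M i i) hX.eq
    simp only [Matrix.conjTranspose_apply] at h1
    exact Complex.conj_eq_iff_im.mp h1
  exact Complex.ext (by simp) (by simp [him])

/-- Jordan decomposition of a Hermitian matrix. -/
lemma jordan {Δ : Matrix n n ℂ} (hΔ : Δ.IsHermitian) :
    ∃ P Q : Matrix n n ℂ, P.PosSemidef ∧ Q.PosSemidef ∧ Δ = P - Q ∧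
      traceNorm Δ = P.trace.re + Q.trace.re ∧ P.trace - Q.trace = Δ.trace ∧
      P.trace = (P.trace.re : ℂ) ∧ Q.trace = (Q.trace.re : ℂ) := by
  set S : Matrix n n ℂ := (hΔ.eigenvectorUnitary : Matrix n n ℂ)
  set lam := hΔ.eigenvalues
  refine ⟨S * Matrix.diagonal (fun i => Complex.ofReal (max (lam i) 0)) * star S,
          S * Matrix.diagonal (fun i => Complex.ofReal (max (-lam i) 0)) * star S,
          ?_, ?_, ?_, ?_, ?_, ?_, ?_⟩
  · rw [Matrix.star_eq_conjTranspose]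
    exact (Matrix.PosSemidef.diagonal (fun i => by
      simp [Complex.zero_le_real, le_max_right])).mul_mul_conjTranspose_same S
  · rw [Matrix.star_eq_conjTranspose]
    exact (Matrix.PosSemidef.diagonal (fun i => by
      simp [Complex.zero_le_real, le_max_right])).mul_mul_conjTranspose_same S
  · rw [← Matrix.sub_mul, ← Matrix.mul_sub, Matrix.diagonal_sub]
    have h2 : (fun i => Complex.ofReal (max (lam i) 0) - Complex.ofReal (max (-lam i) 0))
        = RCLike.ofReal ∘ lam := by
      funext i
      simp [← Complex.ofReal_sub, max_zero_sub_max_neg_zero_eq_self]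
    rw [h2]
    exact hΔ.spectral_theorem
  · rw [traceNorm_herm hΔ, trace_conj_unitary, trace_conj_unitary,
      Matrix.trace_diagonal, Matrix.trace_diagonal]
    simp only [← Complex.ofReal_sum, Complex.ofReal_re]
    rw [← Finset.sum_add_distrib]
    congr 1; funext i
    rw [← max_zero_add_max_neg_zero_eq_abs_self]
  · rw [trace_conj_unitary, trace_conj_unitary, Matrix.trace_diagonal, Matrix.trace_diagonal]
    have hΔtr : Δ.trace = ∑ i, Complex.ofReal (lam i) := by
      conv_lhs => rw [hΔ.spectral_theorem, Unitary.conjStarAlgAut_apply]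
      rw [trace_conj_unitary, Matrix.trace_diagonal]
      rfl
    rw [hΔtr]
    rw [← Finset.sum_sub_distrib]
    congr 1; funext i
    rw [← Complex.ofReal_sub, max_zero_sub_max_neg_zero_eq_self]
  · rw [trace_conj_unitary, Matrix.trace_diagonal, ← Complex.ofReal_sum]
    simp
  · rw [trace_conj_unitary, Matrix.trace_diagonal, ← Complex.ofReal_sum]
    simp

lemma traceNorm_sub_le {P Q : Matrix n n ℂ} (hP : P.PosSemidef) (hQ : Q.PosSemidef) :
    traceNorm (P - Q) ≤ P.trace.re + Q.trace.re := by
  have hM : (P - Q).IsHermitian := hP.1.sub hQ.1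
  set S : Matrix n n ℂ := (hM.eigenvectorUnitary : Matrix n n ℂ)
  set lam := hM.eigenvalues
  have hdiag : star S * (P - Q) * S = Matrix.diagonal (RCLike.ofReal ∘ lam) :=
    by
      have h := hM.conjStarAlgAut_star_eigenvectorUnitary
      rw [Unitary.conjStarAlgAut_apply, Unitary.coe_star, star_star] at h
      exact h
  have hP' : (star S * P * S).PosSemidef := by
    rw [Matrix.star_eq_conjTranspose]; exact hP.conjTranspose_mul_mul_same S
  have hQ' : (star S * Q * S).PosSemidef := by
    rw [Matrix.star_eq_conjTranspose]; exact hQ.conjTranspose_mul_mul_same S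
  have hentry : ∀ i, lam i = ((star S * P * S) i i).re - ((star S * Q * S) i i).re := by
    intro i
    have h1 : star S * (P - Q) * S = star S * P * S - star S * Q * S := by
      rw [Matrix.mul_sub, Matrix.sub_mul]
    have h2 := congrArg (fun M => (M i i).re) (h1.symm.trans hdiag)
    simpa [Matrix.diagonal_apply_eq] using h2.symm
  rw [traceNorm_herm hM]
  have hbound : ∀ i, |lam i| ≤ ((star S * P * S) i i).re + ((star S * Q * S) i i).re := by
    intro i
    rw [hentry i]
    have := (psd_diag_entry hP' i).1
    have := (psd_diag_entry hQ' i).1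
    exact (abs_sub _ _).trans (by rw [abs_of_nonneg ‹0 ≤ ((star S * P * S) i i).re›,
      abs_of_nonneg ‹0 ≤ ((star S * Q * S) i i).re›])
  calc ∑ i, |lam i| ≤ ∑ i, (((star S * P * S) i i).re + ((star S * Q * S) i i).re) :=
        Finset.sum_le_sum fun i _ => hbound i
    _ = (star S * P * S).trace.re + (star S * Q * S).trace.re := by
        rw [Finset.sum_add_distrib]
        simp [Matrix.trace, Matrix.diag, Complex.re_sum]
    _ = P.trace.re + Q.trace.re := by
        have e : ∀ A : Matrix n n ℂ, (star S * A * S).trace = A.trace := by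
          intro A
          rw [Matrix.trace_mul_cycle]
          rw [Matrix.mem_unitaryGroup_iff.mp hM.eigenvectorUnitary.2, Matrix.one_mul]
        rw [e, e]

variable {dA dB : ℕ} {ι : Type} [Fintype ι]

lemma mulVec_sumH {p q : Type*} [Fintype q] {κ : Type*} (s : Finset κ)
    (f : κ → Matrix p q ℂ) (v : q → ℂ) :
    (∑ k ∈ s, f k) *ᵥ v = ∑ k ∈ s, f k *ᵥ v := by
  funext i
  simp only [Matrix.mulVec, dotProduct, Finset.sum_apply, Matrix.sum_apply,
    Finset.sum_mul]
  rw [Finset.sum_comm]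

lemma dotProduct_sumH {p : Type*} [Fintype p] {κ : Type*} (s : Finset κ)
    (u : p → ℂ) (f : κ → p → ℂ) :
    dotProduct u (∑ k ∈ s, f k) = ∑ k ∈ s, dotProduct u (f k) := by
  simp only [dotProduct, Finset.sum_apply, Finset.mul_sum]
  rw [Finset.sum_comm]

lemma kron_quad (A : Matrix (Fin dA) (Fin dA) ℂ) (B : Matrix (Fin dB) (Fin dB) ℂ)
    (a : Fin dA → ℂ) (b : Fin dB → ℂ) :
    dotProduct (star fun p : Fin dA × Fin dB => a p.1 * b p.2)
      ((A ⊗ₖ B) *ᵥ fun p => a p.1 * b p.2)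
    = (dotProduct (star a) (A *ᵥ a)) * (dotProduct (star b) (B *ᵥ b)) := by
  have hmv : ((A ⊗ₖ B) *ᵥ fun p => a p.1 * b p.2) = fun p => (A *ᵥ a) p.1 * (B *ᵥ b) p.2 := by
    funext p
    simp only [Matrix.mulVec, dotProduct, Matrix.kroneckerMap_apply, Fintype.sum_prod_type]
    rw [Fintype.sum_mul_sum]
    apply Finset.sum_congr rfl; intro j _
    apply Finset.sum_congr rfl; intro c _
    ring
  rw [hmv]
  simp only [dotProduct, Pi.star_apply, star_mul', Fintype.sum_prod_type]
  rw [Fintype.sum_mul_sum]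
  apply Finset.sum_congr rfl; intro j _
  apply Finset.sum_congr rfl; intro c _
  ring

section channel

variable (K : ι → Matrix (Fin dB) (Fin dA) ℂ)
  (Φ : Matrix (Fin dA) (Fin dA) ℂ → Matrix (Fin dB) (Fin dB) ℂ)
  (hΦ : ∀ x, Φ x = ∑ i, K i * x * (K i)ᴴ)
include hΦ

lemma Φ_psd {ρ : Matrix (Fin dA) (Fin dA) ℂ} (hρ : ρ.PosSemidef) : (Φ ρ).PosSemidef := by
  rw [hΦ]
  exact Finset.sum_induction _ _ (fun a b ha hb => ha.add hb) Matrix.PosSemidef.zero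
    (fun i _ => hρ.mul_mul_conjTranspose_same (K i))

lemma Φ_trace (hK : ∑ i, (K i)ᴴ * K i = 1) (x : Matrix (Fin dA) (Fin dA) ℂ) :
    (Φ x).trace = x.trace := by
  rw [hΦ, Matrix.trace_sum]
  have h : ∀ i : ι, (K i * x * (K i)ᴴ).trace = ((K i)ᴴ * K i * x).trace := by
    intro i
    rw [Matrix.trace_mul_cycle, Matrix.mul_assoc]
  rw [Finset.sum_congr rfl fun i _ => h i, ← Matrix.trace_sum, ← Finset.sum_mul, hK,
    Matrix.one_mul]

lemma Φ_sub (x y : Matrix (Fin dA) (Fin dA) ℂ) : Φ (x - y) = Φ x - Φ y := by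
  simp [hΦ, Matrix.mul_sub, Matrix.sub_mul, Finset.sum_sub_distrib]

lemma Φ_sum {κ : Type*} (s : Finset κ) (f : κ → Matrix (Fin dA) (Fin dA) ℂ) :
    Φ (∑ k ∈ s, f k) = ∑ k ∈ s, Φ (f k) := by
  simp only [hΦ, Matrix.mul_sum, Matrix.sum_mul]
  rw [Finset.sum_comm]

lemma Φ_smul (c : ℂ) (x : Matrix (Fin dA) (Fin dA) ℂ) : Φ (c • x) = c • Φ x := by
  simp [hΦ, Matrix.mul_smul, Matrix.smul_mul, Finset.smul_sum]

lemma Φ_herm {x : Matrix (Fin dA) (Fin dA) ℂ} (hx : x.IsHermitian) : (Φ x).IsHermitian := by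
  rw [hΦ, Matrix.IsHermitian]
  rw [Matrix.conjTranspose_sum]
  congr 1; funext i
  simp [Matrix.conjTranspose_mul, Matrix.mul_assoc, hx.eq]

lemma Φ_expand (x : Matrix (Fin dA) (Fin dA) ℂ) :
    Φ x = ∑ i : Fin dA, ∑ j : Fin dA, x i j • Φ (Matrix.single i j 1) := by
  conv_lhs => rw [Matrix.matrix_eq_sum_single x]
  rw [Φ_sum K Φ hΦ]
  congr 1; funext i
  rw [Φ_sum K Φ hΦ]
  congr 1; funext j
  rw [show Matrix.single i j (x i j) = x i j • Matrix.single i j (1 : ℂ) by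
    rw [Matrix.smul_single, smul_eq_mul, mul_one]]
  rw [Φ_smul K Φ hΦ]

lemma key (hdA : dA ≠ 0)
    {X : Matrix (Fin dB) (Fin dB) ℂ} (hX : X.IsHermitian)
    (hC : (choi Φ - (1 : Matrix (Fin dA) (Fin dA) ℂ) ⊗ₖ X).PosSemidef)
    (v : Fin dA → ℂ) :
    (Φ (Matrix.vecMulVec v (star v))
      - ((dA : ℂ) * (∑ i, v i * star (v i))) • X).PosSemidef := by
  have hexp := Φ_expand K Φ hΦ
  set c : ℂ := (dA : ℂ) * (∑ i, v i * star (v i)) with hc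
  have hcstar : star c = c := by
    simp only [hc, star_mul', star_natCast, star_sum, star_star]
    congr 1
    apply Finset.sum_congr rfl; intro i _; ring
  refine Matrix.PosSemidef.of_dotProduct_mulVec_nonneg ?_ ?_
  · have h1 : (Matrix.vecMulVec v (star v)).IsHermitian := by
      rw [Matrix.IsHermitian]
      funext i j
      simp [Matrix.vecMulVec_apply, Matrix.conjTranspose_apply, mul_comm]
    have h2 := Φ_herm K Φ hΦ h1
    rw [Matrix.IsHermitian, Matrix.conjTranspose_sub, Matrix.conjTranspose_smul, hcstar,
      h2.eq, hX.eq]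
  · intro u
    set w : Fin dA × Fin dB → ℂ := fun p => star (v p.1) * u p.2 with hw
    have h0 := hC.dotProduct_mulVec_nonneg w
    have hdAC : (0:ℂ) ≤ (dA : ℂ) := by
      rw [show ((dA : ℂ)) = ((dA : ℝ) : ℂ) by norm_cast]
      rw [Complex.zero_le_real]
      positivity
    have hkey : dotProduct (star u)
        ((Φ (Matrix.vecMulVec v (star v)) - c • X) *ᵥ u)
        = (dA : ℂ) * dotProduct (star w)
            ((choi Φ - (1 : Matrix (Fin dA) (Fin dA) ℂ) ⊗ₖ X) *ᵥ w) := by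
      rw [Matrix.sub_mulVec, dotProduct_sub, Matrix.sub_mulVec, dotProduct_sub,
        mul_sub]
      congr 1
      · have hchoi : dotProduct (star w) (choi Φ *ᵥ w)
            = (dA : ℂ)⁻¹ * ∑ i : Fin dA, ∑ j : Fin dA,
                (v i * star (v j)) *
                  dotProduct (star u) (Φ (Matrix.single i j 1) *ᵥ u) := by
          rw [choi, Matrix.smul_mulVec, dotProduct_smul, smul_eq_mul]
          congr 1
          rw [mulVec_sumH, dotProduct_sumH]
          apply Finset.sum_congr rfl; intro i _
          rw [mulVec_sumH, dotProduct_sumH]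
          apply Finset.sum_congr rfl; intro j _
          have hkq := kron_quad (Matrix.single i j (1:ℂ))
            (Φ (Matrix.single i j 1)) (fun k => star (v k)) u
          rw [hw]
          rw [hkq]
          congr 1
          simp [dotProduct, Matrix.mulVec, Matrix.single, Matrix.of_apply,
            Finset.mul_sum, ite_and, Finset.sum_ite_eq, Finset.sum_ite_eq']
        rw [hchoi, ← mul_assoc, mul_inv_cancel₀ (by exact_mod_cast hdA), one_mul]
        rw [hexp (Matrix.vecMulVec v (star v))]
        rw [mulVec_sumH, dotProduct_sumH]
        apply Finset.sum_congr rfl; intro i _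
        rw [mulVec_sumH, dotProduct_sumH]
        apply Finset.sum_congr rfl; intro j _
        rw [Matrix.smul_mulVec, dotProduct_smul, smul_eq_mul]
        congr 1
      · rw [Matrix.smul_mulVec, dotProduct_smul, smul_eq_mul, hc]
        have hkq := kron_quad (1 : Matrix (Fin dA) (Fin dA) ℂ) X (fun k => star (v k)) u
        rw [hw, hkq, Matrix.one_mulVec]
        have h3 : dotProduct (star fun k => star (v k)) (fun k => star (v k))
            = ∑ i, v i * star (v i) := by
          simp [dotProduct]
        rw [h3, mul_assoc]
    rw [hkey]
    exact mul_nonneg hdAC h0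

lemma psd_map (hdA : dA ≠ 0)
    {X : Matrix (Fin dB) (Fin dB) ℂ} (hX : X.IsHermitian)
    (hC : (choi Φ - (1 : Matrix (Fin dA) (Fin dA) ℂ) ⊗ₖ X).PosSemidef)
    {ρ : Matrix (Fin dA) (Fin dA) ℂ} (hρ : ρ.PosSemidef) :
    (Φ ρ - ((dA : ℂ) * ρ.trace) • X).PosSemidef := by
  obtain ⟨m, v, hρdecomp⟩ := Matrix.posSemidef_iff_eq_sum_vecMulVec.mp hρ
  have htr : ρ.trace = ∑ k, ∑ i, v k i * star (v k i) := by
    rw [hρdecomp, Matrix.trace_sum]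
    apply Finset.sum_congr rfl; intro k _
    simp [Matrix.trace, Matrix.diag, Matrix.vecMulVec_apply]
  rw [htr, Finset.mul_sum, Finset.sum_smul]
  nth_rewrite 1 [hρdecomp]
  rw [Φ_sum K Φ hΦ, ← Finset.sum_sub_distrib]
  exact Finset.sum_induction _ _ (fun a b ha hb => ha.add hb) Matrix.PosSemidef.zero
    (fun k _ => key K Φ hΦ hdA hX hC (v k))

end channel
end DoeblinAux


/-- `η_tr(Φ) ≤ 1 − α(Φ)` where `α(Φ)` is the quantum Doeblin coefficient
`sup{tr X : X Hermitian, I ⊗ X ≼ J(Φ)}`. -/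
theorem etaTr_le_one_sub_doeblin {dA dB : ℕ} {ι : Type} [Fintype ι]
    (K : ι → Matrix (Fin dB) (Fin dA) ℂ)
    (hK : ∑ i, (K i)ᴴ * K i = 1)
    (Φ : Matrix (Fin dA) (Fin dA) ℂ → Matrix (Fin dB) (Fin dB) ℂ)
    (hΦ : ∀ x, Φ x = ∑ i, K i * x * (K i)ᴴ) :
    etaTr Φ ≤ 1 - sSup {r : ℝ | ∃ X : Matrix (Fin dB) (Fin dB) ℂ, X.IsHermitian ∧
      (choi Φ - (1 : Matrix (Fin dA) (Fin dA) ℂ) ⊗ₖ X).PosSemidef ∧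
      r = X.trace.re} := by
  classical
  set S : Set ℝ := {r : ℝ | ∃ X : Matrix (Fin dB) (Fin dB) ℂ, X.IsHermitian ∧
      (choi Φ - (1 : Matrix (Fin dA) (Fin dA) ℂ) ⊗ₖ X).PosSemidef ∧
      r = X.trace.re} with hSdef
  -- elementwise bound on S when dA ≠ 0
  have hτle : dA ≠ 0 → ∀ x ∈ S, x ≤ 1 := by
    intro hdA x hx
    obtain ⟨X, hX, hC, rfl⟩ := hx
    have a0 : Fin dA := ⟨0, Nat.pos_of_ne_zero hdA⟩
    set vv : Fin dA → ℂ := Pi.single a0 1 with hvv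
    have hkey := DoeblinAux.key K Φ hΦ hdA hX hC vv
    have hsum : (∑ i, vv i * star (vv i)) = 1 := by
      simp [hvv, Pi.single_apply, apply_ite (star : ℂ → ℂ)]
    rw [hsum, mul_one] at hkey
    have h1 := DoeblinAux.psd_trace_re_nonneg hkey
    have htrout : (Matrix.vecMulVec vv (star vv)).trace = 1 := by
      simp [hvv, Matrix.trace, Matrix.diag, Matrix.vecMulVec_apply, Pi.single_apply,
        apply_ite (star : ℂ → ℂ)]
    rw [Matrix.trace_sub, Matrix.trace_smul, DoeblinAux.Φ_trace K Φ hΦ hK, htrout] at h1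
    rw [DoeblinAux.herm_trace_real hX] at h1
    have hre : ((1 : ℂ) - (dA : ℂ) • ((X.trace.re : ℝ) : ℂ)).re = 1 - dA * X.trace.re := by
      simp
    rw [hre] at h1
    have hdA1 : (1:ℝ) ≤ (dA : ℝ) := by exact_mod_cast Nat.one_le_iff_ne_zero.mpr hdA
    nlinarith [h1]
  have hα1 : sSup S ≤ 1 := by
    by_cases hdA : dA = 0
    · subst hdA
      by_cases hdB : dB = 0
      · subst hdB
        apply Real.sSup_le _ zero_le_one
        rintro x ⟨X, hX, hC, rfl⟩
        have : X.trace = 0 := by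
          simp [Matrix.trace, Finset.univ_eq_empty]
        rw [this]
        norm_num
      · rw [Real.sSup_of_not_bddAbove]
        · exact zero_le_one
        · rintro ⟨b, hb⟩
          have hdBpos : (0:ℝ) < dB := by
            have := Nat.pos_of_ne_zero hdB
            exact_mod_cast this
          have hmem : (b + 1 : ℝ) ∈ S := by
            refine ⟨(((b+1)/dB : ℝ) : ℂ) • (1 : Matrix (Fin dB) (Fin dB) ℂ), ?_, ?_, ?_⟩
            · rw [Matrix.IsHermitian, Matrix.conjTranspose_smul, Matrix.conjTranspose_one]
              rw [Complex.star_def, Complex.conj_ofReal]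
            · exact DoeblinAux.psd_empty _
            · rw [Matrix.trace_smul, Matrix.trace_one]
              simp only [Fintype.card_fin, smul_eq_mul]
              rw [show (((b+1)/dB : ℝ) : ℂ) * ((dB:ℕ) : ℂ) = (((b+1)/dB * dB : ℝ) : ℂ) by
                push_cast; ring]
              rw [Complex.ofReal_re]
              field_simp
          have := hb hmem
          linarith
    · exact Real.sSup_le (hτle hdA) zero_le_one
  apply Real.sSup_le _ (by linarith)
  rintro r ⟨ρ, σ, hρ, hσ, hne, rfl⟩
  have hdA : dA ≠ 0 := by
    rintro rfl
    have h0 : ρ.trace = 0 := by simp [Matrix.trace, Finset.univ_eq_empty]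
    rw [hρ.2] at h0
    exact one_ne_zero h0
  obtain ⟨P, Q, hP, hQ, hPQ, htn, htrPQ, hPre, hQre⟩ := DoeblinAux.jordan (hρ.1.1.sub hσ.1.1)
  set t := P.trace.re with ht
  have htrΔ : (ρ - σ).trace = 0 := by rw [Matrix.trace_sub, hρ.2, hσ.2]; ring
  have htrPQ' : P.trace = Q.trace := by
    rw [htrΔ] at htrPQ
    exact sub_eq_zero.mp htrPQ
  have hQt : Q.trace.re = t := by rw [← htrPQ']
  have ht0 : 0 ≤ t := DoeblinAux.psd_trace_re_nonneg hP
  have htn2 : traceNorm (ρ - σ) = t + t := by rw [htn, hQt]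
  have hΦst : Φ ρ - Φ σ = Φ P - Φ Q := by
    rw [← DoeblinAux.Φ_sub K Φ hΦ, ← DoeblinAux.Φ_sub K Φ hΦ, hPQ]
  have hDP : traceNorm (Φ ρ - Φ σ) ≤ t + t := by
    rw [hΦst]
    calc traceNorm (Φ P - Φ Q) ≤ (Φ P).trace.re + (Φ Q).trace.re :=
          DoeblinAux.traceNorm_sub_le (DoeblinAux.Φ_psd K Φ hΦ hP) (DoeblinAux.Φ_psd K Φ hΦ hQ)
      _ = t + t := by
          rw [DoeblinAux.Φ_trace K Φ hΦ hK, DoeblinAux.Φ_trace K Φ hΦ hK, hQt]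
  have htnn : 0 ≤ traceNorm (Φ ρ - Φ σ) := by
    obtain ⟨P', Q', hP', hQ', hPQ', htn', -, -, -⟩ :=
      DoeblinAux.jordan ((DoeblinAux.Φ_psd K Φ hΦ hρ.1).1.sub (DoeblinAux.Φ_psd K Φ hΦ hσ.1).1)
    rw [htn']
    exact add_nonneg (DoeblinAux.psd_trace_re_nonneg hP') (DoeblinAux.psd_trace_re_nonneg hQ')
  have hr1 : traceNorm (Φ ρ - Φ σ) / traceNorm (ρ - σ) ≤ 1 := by
    rcases eq_or_ne t 0 with h0 | h0
    · rw [htn2, h0, add_zero, div_zero]; exact zero_le_one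
    · have h2t : 0 < t + t := by
        rcases lt_or_eq_of_le ht0 with h | h
        · linarith
        · exact absurd h.symm h0
      rw [div_le_one (by rw [htn2]; exact h2t)]
      rw [htn2]
      exact hDP
  have hXb : ∀ x ∈ S, x ≤ 1 - traceNorm (Φ ρ - Φ σ) / traceNorm (ρ - σ) := by
    rintro x ⟨X, hX, hC, rfl⟩
    set τ := X.trace.re with hτ
    have hτ1 : τ ≤ 1 := hτle hdA _ ⟨X, hX, hC, rfl⟩
    have hM1 := DoeblinAux.psd_map K Φ hΦ hdA hX hC hP
    have hM2 := DoeblinAux.psd_map K Φ hΦ hdA hX hC hQ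
    have hdiff : Φ P - Φ Q = (Φ P - ((dA:ℂ) * P.trace) • X) - (Φ Q - ((dA:ℂ) * Q.trace) • X) := by
      rw [htrPQ']
      abel
    have htrace1 : (Φ P - ((dA:ℂ) * P.trace) • X).trace.re = t - dA * t * τ := by
      rw [Matrix.trace_sub, Matrix.trace_smul, DoeblinAux.Φ_trace K Φ hΦ hK,
        hPre, DoeblinAux.herm_trace_real hX]
      simp [hτ]
    have htrace2 : (Φ Q - ((dA:ℂ) * Q.trace) • X).trace.re = t - dA * t * τ := by
      rw [Matrix.trace_sub, Matrix.trace_smul, DoeblinAux.Φ_trace K Φ hΦ hK,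
        hQre, DoeblinAux.herm_trace_real hX]
      simp [hτ, hQt]
    have hnum : traceNorm (Φ ρ - Φ σ) ≤ (t + t) * (1 - dA * τ) := by
      rw [hΦst, hdiff]
      calc traceNorm ((Φ P - ((dA:ℂ) * P.trace) • X) - (Φ Q - ((dA:ℂ) * Q.trace) • X))
          ≤ (Φ P - ((dA:ℂ) * P.trace) • X).trace.re
            + (Φ Q - ((dA:ℂ) * Q.trace) • X).trace.re :=
            DoeblinAux.traceNorm_sub_le hM1 hM2
        _ = (t + t) * (1 - dA * τ) := by rw [htrace1, htrace2]; ring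
    rcases eq_or_ne t 0 with h0 | h0
    · rw [htn2, h0, add_zero, div_zero]
      linarith
    · have h2t : 0 < t + t := by
        rcases lt_or_eq_of_le ht0 with h | h
        · linarith
        · exact absurd h.symm h0
      have hr2 : traceNorm (Φ ρ - Φ σ) / traceNorm (ρ - σ) ≤ 1 - dA * τ := by
        rw [htn2, div_le_iff₀ h2t]
        calc traceNorm (Φ ρ - Φ σ) ≤ (t + t) * (1 - dA * τ) := hnum
          _ = (1 - dA * τ) * (t + t) := by ring
      rcases le_or_gt τ 0 with hτ0 | hτ0
      · linarith
      · have hdA1 : (1:ℝ) ≤ (dA : ℝ) := by exact_mod_cast Nat.one_le_iff_ne_zero.mpr hdA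
        nlinarith
  have := Real.sSup_le hXb (by linarith)
  linarith
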